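/- Let n ≥ 1 and let X be a nonempty type of auxiliary values. Suppose p_k, p̂_k : ℝ → X → ℝ (k ∈ Fin n) are coordinate densities that are strictly positive and C² in their first argument, and h : (Fin n → ℝ) → (Fin n → ℝ) is a bijection that is C² with C² inverse such that for every x ∈ X the pushforward under h of the measure (volume on Fin n → ℝ).withDensity (s ↦ ENNReal.ofReal (∏_k p_k (s k) x)) equals (volume on Fin n → ℝ).withDensity (s ↦ ENNReal.ofReal (∏_k p̂_k (s k) x)). For s : Fin n → ℝ and x ∈ X define w(s,x) ∈ Fin (2n) → ℝ by w(s,x)_k = (first derivative of t ↦ log (p_k t x)) evaluated at s k for k < n, and w(s,x)_{n+k} = (second derivative of t ↦ log (p_k t x)) evaluated at s k for k < n. Assume that for every s there exist x₀, x₁, …, x_{2n} ∈ X such that the 2n vectors w(s,x_j) − w(s,x₀), j = 1,…,2n, are linearly independent in Fin (2n) → ℝ. Let g denote the inverse of h. Then for every point ŝ : Fin n → ℝ, every k ∈ Fin n, and all i ≠ j in Fin n: (fderiv ℝ g ŝ (Pi.single i 1) k) * (fderiv ℝ g ŝ (Pi.single j 1) k) = 0, and the mixed second partial derivative of the k-th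 component of g in the directions i and j vanishes at ŝ, i.e., fderiv ℝ (u ↦ fderiv ℝ g u (Pi.single j 1) k) ŝ (Pi.single i 1) = 0. -/

import Mathlib

/-!
By the change of variables formula, matching the pushforwards gives
`∏ₖ p̂ₖ(uₖ, x) = |det Dg(u)| · ∏ₖ pₖ(g(u)ₖ, x)`, so
`∑ₖ log pₖ(g(v)ₖ, x) - ∑ₖ log p̂ₖ(vₖ, x) = -log |det Dg(v)|` does not depend on `x`.
Applying the mixed partial `∂ᵢ∂ⱼ` (`i ≠ j`) kills the separable `p̂` term; what remains is
`∑ₖ (ℓₖ''(x) ∂ᵢgₖ ∂ⱼgₖ + ℓₖ'(x) ∂ᵢ∂ⱼgₖ)`, where `ℓₖ(x) = log pₖ(·, x)` is taken at `g(ŝ)ₖ`.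
This is the dot product of `w(g(ŝ), x)` with the vector `(∂ᵢ∂ⱼgₖ, ∂ᵢgₖ ∂ⱼgₖ)ₖ`; being
independent of `x`, it shows that this vector is orthogonal to the `2n` differences
`w(g(ŝ), xⱼ) - w(g(ŝ), x₀)` of (A3). These span `ℝ²ⁿ`, so the vector vanishes.
-/

open MeasureTheory Function

section ChangeOfVariables

variable {E : Type*} [NormedAddCommGroup E] [NormedSpace ℝ E] [FiniteDimensional ℝ E]
  [MeasurableSpace E] [BorelSpace E] (μ : Measure E) [μ.IsAddHaarMeasure] {h g : E → E}

theorem map_withDensity_eq_withDensity_abs_det_fderiv_mul (hh : Measurable h)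
    (hg : Differentiable ℝ g) (hgh : LeftInverse g h) (hhg : RightInverse g h) (f : E → ENNReal) :
    (μ.withDensity f).map h =
      μ.withDensity fun u => ENNReal.ofReal |(fderiv ℝ g u).det| * f (g u) := by
  ext A hA
  have hpre : h ⁻¹' A = g '' A := by
    ext s
    exact ⟨fun hs => ⟨h s, hs, hgh s⟩, by rintro ⟨u, hu, rfl⟩; simpa [hhg u] using hu⟩
  rw [Measure.map_apply hh hA, withDensity_apply _ (hh hA), withDensity_apply _ hA, hpre,
    lintegral_image_eq_lintegral_abs_det_fderiv_mul μ hA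
      (fun u _ => (hg u).hasFDerivAt.hasFDerivWithinAt) hhg.injective.injOn]

theorem eq_abs_det_fderiv_mul_comp_of_map_withDensity_eq {ρ ρ' : E → ℝ}
    (hρ : Continuous ρ) (hρ' : Continuous ρ') (hρ_nonneg : 0 ≤ ρ) (hρ'_nonneg : 0 ≤ ρ')
    (hh : Measurable h) (hg : ContDiff ℝ 1 g) (hgh : LeftInverse g h) (hhg : RightInverse g h)
    (hmap : (μ.withDensity fun s => ENNReal.ofReal (ρ s)).map h =
      μ.withDensity fun s => ENNReal.ofReal (ρ' s)) (u : E) :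
    ρ' u = |(fderiv ℝ g u).det| * ρ (g u) := by
  have hcont : Continuous fun u => |(fderiv ℝ g u).det| * ρ (g u) :=
    (ContinuousLinearMap.continuous_det.comp (hg.continuous_fderiv one_ne_zero)).abs.mul
      (hρ.comp hg.continuous)
  simp_rw [map_withDensity_eq_withDensity_abs_det_fderiv_mul μ hh (hg.differentiable one_ne_zero)
    hgh hhg, ← ENNReal.ofReal_mul (abs_nonneg _)] at hmap
  have hae := (withDensity_eq_iff_of_sigmaFinite
    (ENNReal.continuous_ofReal.comp hcont).aemeasurable
    (ENNReal.continuous_ofReal.comp hρ').aemeasurable).mp hmap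
  have := congrFun ((Continuous.ae_eq_iff_eq μ (ENNReal.continuous_ofReal.comp hcont)
    (ENNReal.continuous_ofReal.comp hρ')).mp hae) u
  exact ((ENNReal.ofReal_eq_ofReal_iff (mul_nonneg (abs_nonneg _) (hρ_nonneg _))
    (hρ'_nonneg u)).mp this).symm

end ChangeOfVariables

theorem sum_log_sub_sum_log_eq_neg_log_of_prod_eq_mul_prod {ι : Type*} [Fintype ι]
    {a b : ι → ℝ} {d : ℝ} (ha : ∀ k, 0 < a k) (hb : ∀ k, 0 < b k)
    (h : ∏ k, b k = d * ∏ k, a k) :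
    ∑ k, Real.log (a k) - ∑ k, Real.log (b k) = -Real.log d := by
  have hd : d ≠ 0 := by
    rintro rfl
    exact (Finset.prod_pos fun k _ => hb k).ne' (by rw [h, zero_mul])
  have := congrArg Real.log h
  rw [Real.log_mul hd (Finset.prod_pos fun k _ => ha k).ne', Real.log_prod fun k _ => (hb k).ne',
    Real.log_prod fun k _ => (ha k).ne'] at this
  linarith

theorem sum_log_comp_sub_sum_log_eq_neg_log_abs_det {ι : Type*} [Fintype ι]
    {p p' : ι → ℝ → ℝ} (hp_pos : ∀ k t, 0 < p k t) (hp'_pos : ∀ k t, 0 < p' k t)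
    (hp : ∀ k, Continuous (p k)) (hp' : ∀ k, Continuous (p' k)) {h g : (ι → ℝ) → ι → ℝ}
    (hh : Measurable h) (hg : ContDiff ℝ 1 g) (hgh : LeftInverse g h) (hhg : RightInverse g h)
    (hmap : (volume.withDensity fun s => ENNReal.ofReal (∏ k, p k (s k))).map h =
      volume.withDensity fun s => ENNReal.ofReal (∏ k, p' k (s k))) (v : ι → ℝ) :
    ∑ k, Real.log (p k (g v k)) - ∑ k, Real.log (p' k (v k)) = -Real.log |(fderiv ℝ g v).det| :=
  sum_log_sub_sum_log_eq_neg_log_of_prod_eq_mul_prod (fun k => hp_pos k _) (fun k => hp'_pos k _) <|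
    eq_abs_det_fderiv_mul_comp_of_map_withDensity_eq volume
      (continuous_finsetProd _ fun k _ => (hp k).comp (continuous_apply k))
      (continuous_finsetProd _ fun k _ => (hp' k).comp (continuous_apply k))
      (fun _ => Finset.prod_nonneg fun k _ => (hp_pos k _).le)
      (fun _ => Finset.prod_nonneg fun k _ => (hp'_pos k _).le) hh hg hgh hhg hmap v

section MixedPartials

variable {E F ι : Type*} [NormedAddCommGroup E] [NormedSpace ℝ E] [NormedAddCommGroup F]
  [NormedSpace ℝ F] [Fintype ι]

theorem ContDiff.differentiable_fderiv_apply {f : E → F} (hf : ContDiff ℝ 2 f) (e : E) :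
    Differentiable ℝ fun u => fderiv ℝ f u e :=
  ((hf.fderiv_right (m := 1) le_rfl).clm_apply contDiff_const).differentiable one_ne_zero

theorem fderiv_fderiv_sub_apply {f f' : E → F} (hf : ContDiff ℝ 2 f) (hf' : ContDiff ℝ 2 f')
    (s e e' : E) :
    fderiv ℝ (fun u => fderiv ℝ (fun v => f v - f' v) u e) s e' =
      fderiv ℝ (fun u => fderiv ℝ f u e) s e' - fderiv ℝ (fun u => fderiv ℝ f' u e) s e' := by
  simp_rw [fderiv_fun_sub (hf.differentiable two_ne_zero _) (hf'.differentiable two_ne_zero _),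
    sub_apply]
  rw [fderiv_fun_sub (hf.differentiable_fderiv_apply e s) (hf'.differentiable_fderiv_apply e s),
    sub_apply]

theorem fderiv_comp_apply_eq_deriv_mul {f : ℝ → ℝ} {φ : E → ℝ} {s : E}
    (hf : DifferentiableAt ℝ f (φ s)) (hφ : DifferentiableAt ℝ φ s) (e : E) :
    fderiv ℝ (fun u => f (φ u)) s e = deriv f (φ s) * fderiv ℝ φ s e :=
  congrArg (fun T => T e) (hf.hasDerivAt.comp_hasFDerivAt s hφ.hasFDerivAt).fderiv

theorem fderiv_sum_comp_apply {L : ι → ℝ → ℝ} {g : E → ι → ℝ} {s : E}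
    (hL : ∀ k, DifferentiableAt ℝ (L k) (g s k)) (hg : DifferentiableAt ℝ g s) (e : E) :
    fderiv ℝ (fun v => ∑ k, L k (g v k)) s e = ∑ k, deriv (L k) (g s k) * fderiv ℝ g s e k := by
  have hgk : ∀ k, DifferentiableAt ℝ (fun v => g v k) s := differentiableAt_pi.1 hg
  have hLg : ∀ k, DifferentiableAt ℝ (fun v => L k (g v k)) s := fun k => (hL k).comp s (hgk k)
  rw [fderiv_fun_sum fun k _ => hLg k, sum_apply]
  refine Finset.sum_congr rfl fun k _ => ?_
  rw [fderiv_comp_apply_eq_deriv_mul (φ := fun v => g v k) (hL k) (hgk k), fderiv_apply hg]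
  rfl

theorem fderiv_fderiv_sum_comp_apply {L : ι → ℝ → ℝ} {g : E → ι → ℝ}
    (hL : ∀ k, ContDiff ℝ 2 (L k)) (hg : ContDiff ℝ 2 g) (s e e' : E) :
    fderiv ℝ (fun u => fderiv ℝ (fun v => ∑ k, L k (g v k)) u e) s e' =
      ∑ k, (deriv (deriv (L k)) (g s k) * (fderiv ℝ g s e' k * fderiv ℝ g s e k) +
        deriv (L k) (g s k) * fderiv ℝ (fun u => fderiv ℝ g u e k) s e') := by
  have hg1 : Differentiable ℝ g := hg.differentiable two_ne_zero
  have hgk : ∀ k, Differentiable ℝ fun v => g v k := differentiable_pi.1 hg1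
  have hL' : ∀ k, Differentiable ℝ (deriv (L k)) := fun k =>
    ((hL k).deriv' (n := 1)).differentiable one_ne_zero
  have hL'g : ∀ k, Differentiable ℝ fun u => deriv (L k) (g u k) :=
    fun k => (hL' k).comp (hgk k)
  have hDg : ∀ k, Differentiable ℝ fun u => fderiv ℝ g u e k :=
    differentiable_pi.1 (hg.differentiable_fderiv_apply e)
  simp_rw [fderiv_sum_comp_apply (fun k => (hL k).differentiable two_ne_zero _) (hg1 _)]
  rw [fderiv_fun_sum fun k _ => ((hL'g k).fun_mul (hDg k)) s, sum_apply]
  refine Finset.sum_congr rfl fun k _ => ?_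
  rw [fderiv_fun_mul (hL'g k s) (hDg k s), add_apply, smul_apply, smul_apply, smul_eq_mul,
    smul_eq_mul, fderiv_comp_apply_eq_deriv_mul (φ := fun v => g v k) (hL' k _) (hgk k _),
    fderiv_apply (hg1 s), ContinuousLinearMap.comp_apply, ContinuousLinearMap.proj_apply]
  ring

theorem fderiv_fderiv_sum_apply_single_eq_zero [DecidableEq ι] {M : ι → ℝ → ℝ}
    (hM : ∀ k, ContDiff ℝ 2 (M k)) (s : ι → ℝ) {i j : ι} (hij : i ≠ j) :
    fderiv ℝ (fun u => fderiv ℝ (fun v : ι → ℝ => ∑ k, M k (v k)) u (Pi.single j 1)) s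
      (Pi.single i 1) = 0 := by
  refine (fderiv_fderiv_sum_comp_apply hM contDiff_id s (Pi.single j 1) (Pi.single i 1)).trans ?_
  simp [Pi.single_apply, hij.symm]

theorem fderiv_fderiv_sum_comp_sub_sum_apply_single [DecidableEq ι] {L M : ι → ℝ → ℝ}
    {g : (ι → ℝ) → ι → ℝ} (hL : ∀ k, ContDiff ℝ 2 (L k)) (hM : ∀ k, ContDiff ℝ 2 (M k))
    (hg : ContDiff ℝ 2 g) (s : ι → ℝ) {i j : ι} (hij : i ≠ j) :
    fderiv ℝ (fun u => fderiv ℝ (fun v => ∑ k, L k (g v k) - ∑ k, M k (v k)) u (Pi.single j 1))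
        s (Pi.single i 1) =
      ∑ k, (deriv (deriv (L k)) (g s k) *
          (fderiv ℝ g s (Pi.single i 1) k * fderiv ℝ g s (Pi.single j 1) k) +
        deriv (L k) (g s k) *
          fderiv ℝ (fun u => fderiv ℝ g u (Pi.single j 1) k) s (Pi.single i 1)) := by
  have hLg : ContDiff ℝ 2 fun v => ∑ k, L k (g v k) :=
    ContDiff.sum fun k _ => (hL k).comp (contDiff_pi.1 hg k)
  have hM' : ContDiff ℝ 2 fun v : ι → ℝ => ∑ k, M k (v k) :=
    ContDiff.sum fun k _ => (hM k).comp (contDiff_apply ℝ ℝ k)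
  rw [fderiv_fderiv_sub_apply hLg hM', fderiv_fderiv_sum_comp_apply hL hg,
    fderiv_fderiv_sum_apply_single_eq_zero hM s hij, sub_zero]

end MixedPartials

section LinearAlgebra

variable {K : Type*}

theorem eq_zero_of_forall_dotProduct_eq_zero [Field K] {ι κ : Type*} [Fintype ι] [Fintype κ]
    {v : ι → κ → K} (hv : LinearIndependent K v) (hcard : Fintype.card ι = Fintype.card κ)
    {c : κ → K} (hc : ∀ m, c ⬝ᵥ v m = 0) : c = 0 := by
  classical
  have hspan := hv.span_eq_top_of_card_eq_finrank' (by simpa using hcard)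
  have := LinearMap.ext_on_range hspan (f := dotProductBilin K K c) (g := 0) hc
  funext k
  simpa using LinearMap.congr_fun this (Pi.single k 1)

variable {n : ℕ}

theorem Fin.val_lt_two_mul (k : Fin n) : (k : ℕ) < 2 * n := by omega

theorem Fin.add_val_lt_two_mul (k : Fin n) : n + (k : ℕ) < 2 * n := by omega

def finSumFinTwoMulEquiv (n : ℕ) : Fin n ⊕ Fin n ≃ Fin (2 * n) :=
  finSumFinEquiv.trans (finCongr (two_mul n).symm)

def stackVec (a b : Fin n → K) : Fin (2 * n) → K :=
  Sum.elim a b ∘ (finSumFinTwoMulEquiv n).symm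

theorem stackVec_apply_left (a b : Fin n → K) (k : Fin n) :
    stackVec a b ⟨k, k.val_lt_two_mul⟩ = a k :=
  congrArg (Sum.elim a b) ((finSumFinTwoMulEquiv n).symm_apply_apply (.inl k))

theorem stackVec_apply_right (a b : Fin n → K) (k : Fin n) :
    stackVec a b ⟨n + k, k.add_val_lt_two_mul⟩ = b k :=
  congrArg (Sum.elim a b) ((finSumFinTwoMulEquiv n).symm_apply_apply (.inr k))

theorem stackVec_dotProduct [CommSemiring K] (a b : Fin n → K) (u : Fin (2 * n) → K) :
    stackVec a b ⬝ᵥ u =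
      ∑ k, (a k * u ⟨k, k.val_lt_two_mul⟩ + b k * u ⟨n + k, k.add_val_lt_two_mul⟩) := by
  rw [dotProduct, ← (finSumFinTwoMulEquiv n).sum_comp,
    Fintype.sum_sum_type, ← Finset.sum_add_distrib]
  refine Finset.sum_congr rfl fun k _ => ?_
  rw [← stackVec_apply_left a b k, ← stackVec_apply_right a b k]
  rfl

end LinearAlgebra

/-- The central intermediate claim in the proof of Theorem 1: under the
matched factorized-density generation processes and assumption (A3), every
row of the Jacobian of the inverse indeterminacy map `g = h⁻¹` has at most
one nonzero entry and its mixed second partial derivatives vanish. -/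
theorem inverse_indeterminacy_jacobian_rows_single_nonzero
    (n : ℕ)
    (X : Type*)
    (p p' : Fin n → ℝ → X → ℝ)
    (hp_pos : ∀ (k : Fin n) (t : ℝ) (x : X), 0 < p k t x)
    (hp'_pos : ∀ (k : Fin n) (t : ℝ) (x : X), 0 < p' k t x)
    (hp_smooth : ∀ (k : Fin n) (x : X), ContDiff ℝ 2 (fun t => p k t x))
    (hp'_smooth : ∀ (k : Fin n) (x : X), ContDiff ℝ 2 (fun t => p' k t x))
    (h : (Fin n → ℝ) → (Fin n → ℝ))
    (hC2 : ContDiff ℝ 2 h)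
    (g : (Fin n → ℝ) → (Fin n → ℝ))
    (hg : Function.LeftInverse g h ∧ Function.RightInverse g h)
    (hgC2 : ContDiff ℝ 2 g)
    (hmatch : ∀ x : X,
      Measure.map h
          ((volume : Measure (Fin n → ℝ)).withDensity
            fun s => ENNReal.ofReal (∏ k : Fin n, p k (s k) x)) =
        (volume : Measure (Fin n → ℝ)).withDensity
          fun s => ENNReal.ofReal (∏ k : Fin n, p' k (s k) x))
    (w : (Fin n → ℝ) → X → Fin (2 * n) → ℝ)
    (hw1 : ∀ (s : Fin n → ℝ) (x : X) (k : Fin n),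
      w s x ⟨k.val, by omega⟩ =
        deriv (fun t => Real.log (p k t x)) (s k))
    (hw2 : ∀ (s : Fin n → ℝ) (x : X) (k : Fin n),
      w s x ⟨n + k.val, by omega⟩ =
        deriv (deriv (fun t => Real.log (p k t x))) (s k))
    (hA3 : ∀ s : Fin n → ℝ, ∃ x : Fin (2 * n + 1) → X,
      LinearIndependent ℝ (fun j : Fin (2 * n) => w s (x j.succ) - w s (x 0))) :
    ∀ (shat : Fin n → ℝ) (k i j : Fin n), i ≠ j →
      fderiv ℝ g shat (Pi.single i 1) k * fderiv ℝ g shat (Pi.single j 1) k = 0 ∧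
      fderiv ℝ (fun u => fderiv ℝ g u (Pi.single j 1) k) shat (Pi.single i 1)
        = 0 := by
  intro shat k i j hij
  have hlog_p : ∀ x k, ContDiff ℝ 2 fun t => Real.log (p k t x) :=
    fun x k => (hp_smooth k x).log fun t => (hp_pos k t x).ne'
  have hlog_p' : ∀ x k, ContDiff ℝ 2 fun t => Real.log (p' k t x) :=
    fun x k => (hp'_smooth k x).log fun t => (hp'_pos k t x).ne'
  have hlogdet : ∀ x, (fun v => ∑ k, Real.log (p k (g v k) x) - ∑ k, Real.log (p' k (v k) x)) =
      fun v => -Real.log |(fderiv ℝ g v).det| := fun x =>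
    funext <| sum_log_comp_sub_sum_log_eq_neg_log_abs_det (fun k t => hp_pos k t x)
      (fun k t => hp'_pos k t x) (fun k => (hp_smooth k x).continuous)
      (fun k => (hp'_smooth k x).continuous) hC2.continuous.measurable (hgC2.of_le one_le_two)
      hg.1 hg.2 (hmatch x)
  set a := fun k => fderiv ℝ (fun u => fderiv ℝ g u (Pi.single j 1) k) shat (Pi.single i 1)
  set b := fun k => fderiv ℝ g shat (Pi.single i 1) k * fderiv ℝ g shat (Pi.single j 1) k
  have hdot : ∀ x, stackVec a b ⬝ᵥ w (g shat) x = fderiv ℝ (fun u => fderiv ℝ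
      (fun v => -Real.log |(fderiv ℝ g v).det|) u (Pi.single j 1)) shat (Pi.single i 1) := by
    intro x
    rw [stackVec_dotProduct, ← hlogdet x, fderiv_fderiv_sum_comp_sub_sum_apply_single
      (hlog_p x) (hlog_p' x) hgC2 shat hij]
    refine Finset.sum_congr rfl fun k _ => ?_
    rw [hw1, hw2]
    ring
  obtain ⟨xs, hindep⟩ := hA3 (g shat)
  have hc : stackVec a b = 0 := eq_zero_of_forall_dotProduct_eq_zero hindep rfl fun m => by
    rw [dotProduct_sub, hdot, hdot, sub_self]
  exact ⟨(stackVec_apply_right a b k).symm.trans (congrFun hc _),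
    (stackVec_apply_left a b k).symm.trans (congrFun hc _)⟩
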